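/- arXiv:1711.06249 — 2 statements merged into one kernel-verified Lean document; each statement's English description precedes it below -/
import Mathlib

section
/- Let Y₁,…,Yₙ be i.i.d. nonnegative random variables with continuous distribution function G, and let Gₙ be the empirical distribution function. For z > 0 fixed and continuous functions w : [0,1]² → ℝ₊ and f : ℝ₊² → ℝ₊ (each non-increasing in their first argument), the plug-in estimator Jₙ(w,f) = (1/n) ∑ⱼ w(Gₙ(Y₍ⱼ₎), Gₙ(z)) f(Y₍ⱼ₎, z) 𝟙(Y₍ⱼ₎ ≤ z) converges almost surely to J(w,f) = ∫₀ᶻ w(G(y),G(z)) f(y,z) dG(y) as n → ∞. -/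
open MeasureTheory ProbabilityTheory Set Filter

/-- The empirical cumulative distribution function of the first `n` observations. -/
noncomputable def empCDF {Ω : Type*} (Y : ℕ → Ω → ℝ) (n : ℕ) (ω : Ω) (y : ℝ) : ℝ :=
  (n : ℝ)⁻¹ * ∑ j ∈ Finset.range n, if Y j ω ≤ y then (1 : ℝ) else 0

open Topology

/-!
Since `G` is continuous, every rational level `q ∈ (0, 1)` is attained at some point `t_q`, and
the strong law gives `Gₙ(t_q) → q` simultaneously for all these countably many points almost surely.
Monotonicity of `Gₙ` and `G` squeezes `Gₙ - G` between consecutive levels `k/m`, so `Gₙ → G`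
uniformly (Glivenko–Cantelli). Then, `w` being uniformly continuous on the compact square
`[0, 1]²` and `f(·, z)` bounded on `[0, z]`, the plug-in summands are uniformly close to
`w(G(Yⱼ), G(z)) f(Yⱼ, z) 𝟙(Yⱼ ≤ z)`, whose averages converge to `J(w, f)` by the strong law.
-/

lemma abs_inv_mul_sum_range_le {a : ℕ → ℝ} {B : ℝ} (h : ∀ j, |a j| ≤ B) (n : ℕ) :
    |(n : ℝ)⁻¹ * ∑ j ∈ Finset.range n, a j| ≤ B := by
  rcases n.eq_zero_or_pos with rfl | hn
  · simpa using (abs_nonneg _).trans (h 0)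
  have hn' : (0 : ℝ) < n := by exact_mod_cast hn
  rw [abs_mul, abs_inv, Nat.abs_cast, inv_mul_le_iff₀ hn']
  calc |∑ j ∈ Finset.range n, a j| ≤ ∑ j ∈ Finset.range n, |a j| := Finset.abs_sum_le_sum_abs _ _
    _ ≤ ∑ _j ∈ Finset.range n, B := Finset.sum_le_sum fun j _ => h j
    _ = n * B := by simp

section empCDF

variable {Ω : Type*} (Y : ℕ → Ω → ℝ) (n : ℕ) (ω : Ω)

lemma empCDF_eq_avg_indicator (y : ℝ) :
    empCDF Y n ω y = (n : ℝ)⁻¹ * ∑ j ∈ Finset.range n, (Iic y).indicator 1 (Y j ω) := by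
  simp only [empCDF, indicator, Set.mem_Iic, Pi.one_apply]

lemma empCDF_nonneg (y : ℝ) : 0 ≤ empCDF Y n ω y :=
  mul_nonneg (by positivity) (Finset.sum_nonneg fun j _ => by split_ifs <;> norm_num)

lemma empCDF_le_one (y : ℝ) : empCDF Y n ω y ≤ 1 := by
  refine le_of_abs_le (abs_inv_mul_sum_range_le (fun j => ?_) n)
  split_ifs <;> norm_num

lemma monotone_empCDF : Monotone (empCDF Y n ω) := fun a b hab =>
  mul_le_mul_of_nonneg_left (Finset.sum_le_sum fun j _ => by
    by_cases ha : Y j ω ≤ a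
    · simp [ha, ha.trans hab]
    · simp only [if_neg ha]; split_ifs <;> norm_num) (by positivity)

end empCDF

theorem ae_tendsto_avg_comp {Ω α : Type*} [MeasurableSpace Ω] [MeasurableSpace α]
    {P : Measure Ω} {μ : Measure α} {Y : ℕ → Ω → α} (hY_meas : ∀ j, Measurable (Y j))
    (hY_indep : iIndepFun Y P) (hY_law : ∀ j, Measure.map (Y j) P = μ)
    {h : α → ℝ} (hm : Measurable h) (hint : Integrable h μ) :
    ∀ᵐ ω ∂P, Tendsto (fun n : ℕ => (n : ℝ)⁻¹ * ∑ j ∈ Finset.range n, h (Y j ω))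
      atTop (𝓝 (∫ y, h y ∂μ)) := by
  have hident : ∀ i, IdentDistrib (fun ω => h (Y i ω)) (fun ω => h (Y 0 ω)) P P := fun i =>
    (IdentDistrib.mk (hY_meas i).aemeasurable (hY_meas 0).aemeasurable
      (by rw [hY_law i, hY_law 0])).comp hm
  have hE : ∫ ω, h (Y 0 ω) ∂P = ∫ y, h y ∂μ := by
    rw [← hY_law 0, integral_map (hY_meas 0).aemeasurable hm.aestronglyMeasurable]
  filter_upwards [strong_law_ae_real (fun j ω => h (Y j ω))
    ((hY_law 0 ▸ hint).comp_measurable (hY_meas 0))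
    (fun i j hij => (hY_indep.indepFun hij).comp hm hm) hident] with ω hω
  simpa only [div_eq_inv_mul, hE] using hω

theorem ae_tendsto_empCDF {Ω : Type*} [MeasurableSpace Ω] {P : Measure Ω}
    {μ : Measure ℝ} [IsProbabilityMeasure μ] {Y : ℕ → Ω → ℝ} (hY_meas : ∀ j, Measurable (Y j))
    (hY_indep : iIndepFun Y P) (hY_law : ∀ j, Measure.map (Y j) P = μ) (y : ℝ) :
    ∀ᵐ ω ∂P, Tendsto (fun n => empCDF Y n ω y) atTop (𝓝 (cdf μ y)) := by
  have hind := ae_tendsto_avg_comp hY_meas hY_indep hY_law (h := (Iic y).indicator 1)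
    (measurable_one.indicator measurableSet_Iic) ((integrable_const 1).indicator measurableSet_Iic)
  simpa only [← empCDF_eq_avg_indicator, integral_indicator_one measurableSet_Iic, ← cdf_eq_real]
    using hind

lemma abs_sub_le_of_levels {F G : ℝ → ℝ} (hF : Monotone F) (hG : Monotone G)
    (hF0 : ∀ y, 0 ≤ F y) (hF1 : ∀ y, F y ≤ 1) (hG0 : ∀ y, 0 ≤ G y) (hG1 : ∀ y, G y ≤ 1)
    {m : ℕ} (hm : 0 < m) {e : ℝ} (he : 0 ≤ e) {t : ℕ → ℝ}
    (ht : ∀ k, 0 < k → k < m → G (t k) = k / m ∧ |F (t k) - G (t k)| ≤ e) (y : ℝ) :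
    |F y - G y| ≤ 1 / m + e := by
  have hm' : (0 : ℝ) < m := by exact_mod_cast hm
  have hGm : 0 ≤ m * G y := mul_nonneg hm'.le (hG0 y)
  rw [abs_le]
  constructor
  · -- `y` lies above the level point of height `(⌈m G(y)⌉ - 1) / m`
    set k := ⌈m * G y⌉₊
    have hk_lt : (k : ℝ) < m * G y + 1 := Nat.ceil_lt_add_one hGm
    have hk_le : m * G y ≤ k := Nat.le_ceil _
    rcases Nat.lt_or_ge k 2 with hk | hk
    · have : (k : ℝ) ≤ 1 := by exact_mod_cast Nat.lt_succ_iff.mp hk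
      have : G y ≤ 1 / m := by rw [le_div_iff₀ hm']; linarith
      linarith [hF0 y, abs_nonneg (F y - G y)]
    obtain ⟨i, hi⟩ : ∃ i, k = i + 1 := ⟨k - 1, by omega⟩
    have hkm : k ≤ m := Nat.ceil_le.mpr (by nlinarith [hG1 y])
    obtain ⟨hGt, hFt⟩ := ht i (by omega) (by omega)
    have hik : (k : ℝ) = i + 1 := by exact_mod_cast hi
    have hti : t i ≤ y := (hG.reflect_lt (by rw [hGt, div_lt_iff₀ hm']; linarith)).le
    have : G y ≤ i / m + 1 / m := by rw [← add_div, le_div_iff₀ hm']; linarith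
    linarith [hF hti, (abs_le.mp hFt).1]
  · -- `y` lies below the level point of height `(⌊m G(y)⌋ + 1) / m`
    set k := ⌊m * G y⌋₊
    have hk_le : (k : ℝ) ≤ m * G y := Nat.floor_le hGm
    have hk_lt : m * G y < k + 1 := Nat.lt_floor_add_one _
    have hkG : (k : ℝ) / m ≤ G y := by rw [div_le_iff₀ hm']; linarith
    have hGk : G y < (k + 1) / m := by rw [lt_div_iff₀ hm']; linarith
    have hsplit : ((k : ℝ) + 1) / m = k / m + 1 / m := add_div _ _ _
    rcases Nat.lt_or_ge (k + 1) m with hkm | hkm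
    · obtain ⟨hGt, hFt⟩ := ht (k + 1) k.succ_pos hkm
      push_cast at hGt
      have hyt : y ≤ t (k + 1) := (hG.reflect_lt (hGt ▸ hGk)).le
      linarith [hF hyt, (abs_le.mp hFt).2]
    · have : (1 : ℝ) ≤ (k + 1) / m := by
        rw [le_div_iff₀ hm', one_mul]; exact_mod_cast hkm
      linarith [hF1 y]

theorem tendstoUniformly_of_tendsto_levels {F : ℕ → ℝ → ℝ} {G : ℝ → ℝ}
    (hF : ∀ n, Monotone (F n)) (hG : Monotone G)
    (hF0 : ∀ n y, 0 ≤ F n y) (hF1 : ∀ n y, F n y ≤ 1) (hG0 : ∀ y, 0 ≤ G y) (hG1 : ∀ y, G y ≤ 1)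
    (hlev : ∀ q : ℚ, 0 < q → q < 1 → ∃ t, G t = q ∧ Tendsto (F · t) atTop (𝓝 q)) :
    TendstoUniformly F G atTop := by
  rw [Metric.tendstoUniformly_iff]
  intro ε hε
  obtain ⟨m, hm⟩ := exists_nat_gt (2 / ε)
  have hm' : (0 : ℝ) < m := (by positivity : (0 : ℝ) < 2 / ε).trans hm
  have hmε : 1 / (m : ℝ) < ε / 2 := by
    rw [div_lt_iff₀ hm', div_mul_eq_mul_div, lt_div_iff₀ two_pos]
    rw [div_lt_iff₀ hε] at hm
    linarith
  have hlev_m : ∀ k, 0 < k → k < m →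
      ∃ t, G t = k / m ∧ Tendsto (F · t) atTop (𝓝 (k / m)) := fun k hk hkm => by
    have hmQ : (0 : ℚ) < m := by exact_mod_cast hm'
    have hq1 : (k : ℚ) / m < 1 := by rw [div_lt_one hmQ]; exact_mod_cast hkm
    simpa using hlev (k / m) (by positivity) hq1
  choose! t hGt hFt using hlev_m
  have hclose : ∀ᶠ n in atTop, ∀ k ∈ Finset.range m, 0 < k → |F n (t k) - G (t k)| ≤ ε / 2 := by
    rw [Finset.eventually_all]
    intro k hk
    by_cases hk0 : 0 < k
    · filter_upwards [Metric.tendsto_nhds.mp (hFt k hk0 (Finset.mem_range.mp hk)) _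
        (half_pos hε)] with n hn _
      rw [hGt k hk0 (Finset.mem_range.mp hk)]; exact hn.le
    · exact Eventually.of_forall fun n h => absurd h hk0
  filter_upwards [hclose] with n hn y
  rw [Real.dist_eq, abs_sub_comm]
  have := abs_sub_le_of_levels (hF n) hG (hF0 n) (hF1 n) hG0 hG1 (Nat.cast_pos.mp hm')
    (half_pos hε).le (t := t) (fun k hk hkm =>
      ⟨hGt k hk hkm, hn k (Finset.mem_range.mpr hkm) hk⟩) y
  linarith

theorem ae_tendstoUniformly_empCDF {Ω : Type*} [MeasurableSpace Ω] {P : Measure Ω}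
    {μ : Measure ℝ} [IsProbabilityMeasure μ] {Y : ℕ → Ω → ℝ} (hY_meas : ∀ j, Measurable (Y j))
    (hY_indep : iIndepFun Y P) (hY_law : ∀ j, Measure.map (Y j) P = μ)
    (hcont : Continuous (cdf μ)) :
    ∀ᵐ ω ∂P, TendstoUniformly (fun n => empCDF Y n ω) (cdf μ) atTop := by
  have hsurj : ∀ q : ℚ, 0 < q → q < 1 → ∃ t, cdf μ t = q := fun q hq0 hq1 => by
    obtain ⟨a, ha⟩ := ((tendsto_cdf_atBot μ).eventually (eventually_lt_nhds
      (show (0 : ℝ) < q by exact_mod_cast hq0))).exists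
    obtain ⟨b, hb⟩ := ((tendsto_cdf_atTop μ).eventually (eventually_gt_nhds
      (show (q : ℝ) < 1 by exact_mod_cast hq1))).exists
    exact intermediate_value_univ a b hcont ⟨ha.le, hb.le⟩
  choose! t ht using hsurj
  filter_upwards [ae_all_iff.mpr fun q : ℚ => ae_tendsto_empCDF hY_meas hY_indep hY_law (t q)]
    with ω hω
  refine tendstoUniformly_of_tendsto_levels (monotone_empCDF Y · ω) (monotone_cdf μ)
    (empCDF_nonneg Y · ω) (empCDF_le_one Y · ω) (cdf_nonneg μ) (cdf_le_one μ)
    fun q hq0 hq1 => ⟨t q, ht q hq0 hq1, ?_⟩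
  simpa only [ht q hq0 hq1] using hω q

theorem TendstoUniformly.comp_continuous_pair {ι α : Type*} {l : Filter ι} {K : Set ℝ}
    (hK : IsCompact K) {F : ι → α → ℝ} {G : α → ℝ} (hF : TendstoUniformly F G l)
    (hFK : ∀ i x, F i x ∈ K) (hGK : ∀ x, G x ∈ K) {w : ℝ → ℝ → ℝ}
    (hw : Continuous fun p : ℝ × ℝ => w p.1 p.2) (z : α) :
    TendstoUniformly (fun i x => w (F i x) (F i z)) (fun x => w (G x) (G z)) l := by
  have hpair : TendstoUniformly (fun i x => (F i x, F i z)) (fun x => (G x, G z)) l := by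
    rw [Metric.tendstoUniformly_iff] at hF ⊢
    intro ε hε
    filter_upwards [hF ε hε] with i hi x
    rw [Prod.dist_eq]
    exact max_lt (hi x) (hi z)
  exact ((hK.prod hK).uniformContinuousOn_of_continuous hw.continuousOn).comp_tendstoUniformly
    (fun i x => mk_mem_prod (hFK i x) (hFK i z)) (fun x => mk_mem_prod (hGK x) (hGK z)) hpair

theorem tendsto_avg_of_tendstoUniformly {α : Type*} {H : ℕ → α → ℝ} {H' : α → ℝ}
    (hH : TendstoUniformly H H' atTop) (x : ℕ → α) {c : ℕ → ℝ} {C : ℝ} (hc : ∀ j, |c j| ≤ C)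
    {L : ℝ} (hL : Tendsto (fun n : ℕ => (n : ℝ)⁻¹ * ∑ j ∈ Finset.range n, H' (x j) * c j)
      atTop (𝓝 L)) :
    Tendsto (fun n : ℕ => (n : ℝ)⁻¹ * ∑ j ∈ Finset.range n, H n (x j) * c j) atTop (𝓝 L) := by
  have hC : 0 ≤ C := (abs_nonneg _).trans (hc 0)
  have hdiff : Tendsto (fun n : ℕ => (n : ℝ)⁻¹ *
      ∑ j ∈ Finset.range n, (H n (x j) - H' (x j)) * c j) atTop (𝓝 0) := by
    rw [Metric.tendstoUniformly_iff] at hH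
    rw [Metric.tendsto_nhds]
    intro ε hε
    filter_upwards [hH (ε / (C + 1)) (by positivity)] with n hn
    rw [Real.dist_0_eq_abs]
    calc _ ≤ ε / (C + 1) * C := abs_inv_mul_sum_range_le (fun j => by
          rw [abs_mul, ← Real.dist_eq, dist_comm]
          exact mul_le_mul (hn _).le (hc j) (abs_nonneg _) (by positivity)) n
      _ < ε := by
        rw [div_mul_eq_mul_div, div_lt_iff₀ (by positivity)]
        nlinarith
  refine (zero_add L ▸ hdiff.add hL).congr fun n => ?_
  rw [← mul_add, ← Finset.sum_add_distrib]
  simp only [sub_mul, sub_add_cancel]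

lemma exists_forall_abs_indicator_Icc_le {g : ℝ → ℝ} {a b : ℝ} (hg : ContinuousOn g (Icc a b)) :
    ∃ C, ∀ y, |(Icc a b).indicator g y| ≤ C := by
  obtain ⟨C, hC⟩ := isCompact_Icc.exists_bound_of_continuousOn hg
  refine ⟨max C 0, fun y => ?_⟩
  by_cases hy : y ∈ Icc a b
  · rw [indicator_of_mem hy, ← Real.norm_eq_abs]
    exact le_max_of_le_left (hC y hy)
  · rw [indicator_of_notMem hy, abs_zero]
    exact le_max_right _ _

theorem stmt1_general
    {Ω : Type*} [MeasurableSpace Ω] (P : Measure Ω)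
    (μ : Measure ℝ) [IsProbabilityMeasure μ]
    (Y : ℕ → Ω → ℝ)
    (hY_meas : ∀ j, Measurable (Y j))
    (hY_indep : iIndepFun Y P)
    (hY_law : ∀ j, Measure.map (Y j) P = μ)
    (hY_nonneg : ∀ j ω, 0 ≤ Y j ω)
    (G : ℝ → ℝ) (hG : ∀ y, (μ (Iic y)).toReal = G y) (hGcont : Continuous G)
    (z : ℝ)
    (w f : ℝ → ℝ → ℝ)
    (hw_cont : Continuous fun p : ℝ × ℝ => w p.1 p.2)
    (hf_cont : Continuous fun p : ℝ × ℝ => f p.1 p.2) :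
    ∀ᵐ ω ∂P, Tendsto
      (fun n : ℕ => (n : ℝ)⁻¹ * ∑ j ∈ Finset.range n,
        w (empCDF Y n ω (Y j ω)) (empCDF Y n ω z) * f (Y j ω) z *
          (if Y j ω ≤ z then (1 : ℝ) else 0))
      atTop (nhds (∫ y in Icc 0 z, w (G y) (G z) * f y z ∂μ)) := by
  obtain rfl : G = cdf μ := funext fun y => by rw [← hG, cdf_eq_real, measureReal_def]
  have hf_z : Continuous fun y => f y z := hf_cont.comp (continuous_id.prodMk continuous_const)
  set c : ℝ → ℝ := (Icc 0 z).indicator fun y => f y z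
  obtain ⟨C, hc⟩ := exists_forall_abs_indicator_Icc_le hf_z.continuousOn
  have hsummand : ∀ a j ω, a * f (Y j ω) z * (if Y j ω ≤ z then (1 : ℝ) else 0) =
      a * c (Y j ω) := fun a j ω => by
    by_cases hj : Y j ω ≤ z <;> simp [c, hj, hY_nonneg j ω]
  have hW : Continuous fun y => w (cdf μ y) (cdf μ z) :=
    hw_cont.comp (hGcont.prodMk continuous_const)
  filter_upwards [ae_tendsto_avg_comp hY_meas hY_indep hY_law
      (h := (Icc 0 z).indicator fun y => w (cdf μ y) (cdf μ z) * f y z)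
      ((hW.measurable.mul hf_z.measurable).indicator measurableSet_Icc)
      ((hW.mul hf_z).integrableOn_Icc.integrable_indicator measurableSet_Icc),
    ae_tendstoUniformly_empCDF hY_meas hY_indep hY_law hGcont] with ω hSLLN hGC
  rw [integral_indicator measurableSet_Icc] at hSLLN
  simp only [hsummand]
  refine tendsto_avg_of_tendstoUniformly (hGC.comp_continuous_pair isCompact_Icc
    (fun n y => ⟨empCDF_nonneg Y n ω y, empCDF_le_one Y n ω y⟩)
    (fun y => ⟨cdf_nonneg μ y, cdf_le_one μ y⟩) hw_cont z) (Y · ω) (fun j => hc _) ?_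
  simpa only [c, indicator_mul_right] using hSLLN

theorem stmt1
    {Ω : Type*} [MeasurableSpace Ω] (P : Measure Ω) [IsProbabilityMeasure P]
    (μ : Measure ℝ) [IsProbabilityMeasure μ]
    (Y : ℕ → Ω → ℝ)
    (hY_meas : ∀ j, Measurable (Y j))
    (hY_indep : iIndepFun Y P)
    (hY_law : ∀ j, Measure.map (Y j) P = μ)
    (hY_nonneg : ∀ j ω, 0 ≤ Y j ω)
    (G : ℝ → ℝ) (hG : ∀ y, (μ (Iic y)).toReal = G y) (hGcont : Continuous G)
    (z : ℝ) (hz : 0 < z)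
    (w f : ℝ → ℝ → ℝ)
    (hw_cont : Continuous fun p : ℝ × ℝ => w p.1 p.2)
    (hw_nonneg : ∀ u v, 0 ≤ w u v)
    (hw_anti : ∀ v, Antitone fun u => w u v)
    (hf_cont : Continuous fun p : ℝ × ℝ => f p.1 p.2)
    (hf_nonneg : ∀ y t, 0 ≤ f y t)
    (hf_anti : ∀ t, Antitone fun y => f y t) :
    ∀ᵐ ω ∂P, Tendsto
      (fun n : ℕ => (n : ℝ)⁻¹ * ∑ j ∈ Finset.range n,
        w (empCDF Y n ω (Y j ω)) (empCDF Y n ω z) * f (Y j ω) z *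
          (if Y j ω ≤ z then (1 : ℝ) else 0))
      atTop (nhds (∫ y in Icc 0 z, w (G y) (G z) * f y z ∂μ)) :=
  stmt1_general P μ Y hY_meas hY_indep hY_law hY_nonneg G hG hGcont z w f hw_cont hf_cont
end

section
/- Fix z > 0, w ∈ 𝒲, f ∈ ℱ with w and f continuously differentiable. Define the operator φ_{w,f} on 𝒦 = {k : ℝ → [0,1] increasing} by φ_{w,f}(k) = ∫₀ᶻ w(k(y), k(z)) f(y,z) dG(y). Then φ_{w,f} is Hadamard-differentiable at every k ∈ 𝒦 tangentially to 𝒦' = {k ∈ 𝒦 : k continuous}, with derivative φ'_{w,f}[k](s) = ∫₀ᶻ ( s(y) ∂_u w(k(y),k(z)) + s(z) ∂_v w(k(y),k(z)) ) f(y,z) dG(y) for s ∈ 𝒦'. -/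
open MeasureTheory Set Filter Topology
open scoped NNReal

/-!
The difference quotient of `φ_{w,f}` in direction `sₜ` is the integral of
`(w(k y + t sₜ y, k z + t sₜ z) - w(k y, k z)) / t · f(y,z)`. Pointwise this tends to the
derivative of `w` at `(k y, k z)` applied to `(s y, s z)`. Since `w` is `C¹`, it is Lipschitz on
the compact convex square `[0,1]²`, which contains all points involved; together with
`|sₜ| ≤ 1` this dominates the integrand by `L |f(y,z)|`, integrable because `f(·,z)` is
continuous on `[0,z]`. Dominated convergence concludes.
-/

/-- The class of increasing functions from `ℝ` into `[0,1]`. -/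
def Kclass : Set (ℝ → ℝ) := {k | Monotone k ∧ ∀ y, k y ∈ Icc (0 : ℝ) 1}

/-- Partial derivative of a two-variable function in its first argument. -/
noncomputable def pd1 (w : ℝ → ℝ → ℝ) (u v : ℝ) : ℝ :=
  fderiv ℝ (fun p : ℝ × ℝ => w p.1 p.2) (u, v) (1, 0)

/-- Partial derivative of a two-variable function in its second argument. -/
noncomputable def pd2 (w : ℝ → ℝ → ℝ) (u v : ℝ) : ℝ :=
  fderiv ℝ (fun p : ℝ × ℝ => w p.1 p.2) (u, v) (0, 1)

/-- The operator `φ_{w,f}(k) = ∫₀ᶻ w(k(y),k(z)) f(y,z) dG(y)`. -/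
noncomputable def phiOp (μ : Measure ℝ) (z : ℝ) (w f : ℝ → ℝ → ℝ)
    (k : ℝ → ℝ) : ℝ :=
  ∫ y in Icc 0 z, w (k y) (k z) * f y z ∂μ

theorem HasFDerivAt.tendsto_inv_smul_sub {𝕜 E F α : Type*} [NontriviallyNormedField 𝕜]
    [NormedAddCommGroup E] [NormedSpace 𝕜 E] [NormedAddCommGroup F] [NormedSpace 𝕜 F]
    {g : E → F} {g' : E →L[𝕜] F} {p v : E} {l : Filter α} {t : α → 𝕜} {q : α → E}
    (hg : HasFDerivAt g g' p) (ht : Tendsto t l (𝓝 0)) (ht0 : ∀ᶠ n in l, t n ≠ 0)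
    (hq : Tendsto q l (𝓝 v)) :
    Tendsto (fun n => (t n)⁻¹ • (g (p + t n • q n) - g p)) l (𝓝 (g' v)) := by
  refine (hasFDerivWithinAt_univ.2 hg).lim (by simpa using ht.smul hq)
    (.of_forall fun _ => mem_univ _) (hq.congr' (ht0.mono fun n hn => ?_))
  simp only [smul_smul, inv_mul_cancel₀ hn, one_smul]

theorem fderiv_uncurry_apply (w : ℝ → ℝ → ℝ) (u v a b : ℝ) :
    fderiv ℝ (fun p : ℝ × ℝ => w p.1 p.2) (u, v) (a, b) = a * pd1 w u v + b * pd2 w u v := by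
  have hab : ((a, b) : ℝ × ℝ) = a • ((1 : ℝ), (0 : ℝ)) + b • ((0 : ℝ), (1 : ℝ)) := by simp
  rw [hab, map_add, map_smul, map_smul, smul_eq_mul, smul_eq_mul, pd1, pd2]

theorem tendsto_slope_uncurry {w : ℝ → ℝ → ℝ} {u v a₀ b₀ : ℝ} {α : Type*} {l : Filter α}
    {t a b : α → ℝ} (hw : DifferentiableAt ℝ (fun p : ℝ × ℝ => w p.1 p.2) (u, v))
    (ht : Tendsto t l (𝓝 0)) (ht0 : ∀ᶠ n in l, t n ≠ 0)
    (ha : Tendsto a l (𝓝 a₀)) (hb : Tendsto b l (𝓝 b₀)) :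
    Tendsto (fun n => (w (u + t n * a n) (v + t n * b n) - w u v) / t n) l
      (𝓝 (a₀ * pd1 w u v + b₀ * pd2 w u v)) := by
  rw [← fderiv_uncurry_apply]
  refine (hw.hasFDerivAt.tendsto_inv_smul_sub ht ht0 (ha.prodMk_nhds hb)).congr fun n => ?_
  simp [div_eq_inv_mul]

theorem abs_le_one_of_mem_Kclass {k : ℝ → ℝ} (hk : k ∈ Kclass) (y : ℝ) : |k y| ≤ 1 :=
  abs_le.2 ⟨by linarith [(hk.2 y).1], (hk.2 y).2⟩

theorem abs_sub_le_of_lipschitzOnWith {w : ℝ → ℝ → ℝ} {L : ℝ≥0}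
    (hL : LipschitzOnWith L (fun p : ℝ × ℝ => w p.1 p.2) (Icc 0 1 ×ˢ Icc 0 1))
    {k s : ℝ → ℝ} {τ : ℝ} (hk : k ∈ Kclass) (hs : s ∈ Kclass)
    (hks : (fun y => k y + τ * s y) ∈ Kclass) (y z : ℝ) :
    |w (k y + τ * s y) (k z + τ * s z) - w (k y) (k z)| ≤ L * |τ| := by
  have hdist := hL.dist_le_mul (x := (k y + τ * s y, k z + τ * s z)) ⟨hks.2 y, hks.2 z⟩
    (y := (k y, k z)) ⟨hk.2 y, hk.2 z⟩
  have hτ : max |τ * s y| |τ * s z| ≤ |τ| := by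
    simp only [abs_mul]
    exact max_le (mul_le_of_le_one_right (abs_nonneg τ) (abs_le_one_of_mem_Kclass hs y))
      (mul_le_of_le_one_right (abs_nonneg τ) (abs_le_one_of_mem_Kclass hs z))
  simp only [Prod.dist_eq, Real.dist_eq, add_sub_cancel_left] at hdist
  exact hdist.trans (mul_le_mul_of_nonneg_left hτ L.coe_nonneg)

theorem integrableOn_phiOp_integrand {μ : Measure ℝ} [IsFiniteMeasure μ] {z : ℝ}
    {w f : ℝ → ℝ → ℝ} (hw : Continuous fun p : ℝ × ℝ => w p.1 p.2)
    (hf : ContinuousOn (fun y => f y z) (Icc 0 z)) {k : ℝ → ℝ} (hk : k ∈ Kclass) :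
    IntegrableOn (fun y => w (k y) (k z) * f y z) (Icc 0 z) μ := by
  obtain ⟨M, hM⟩ := (isCompact_Icc.prod isCompact_Icc).exists_bound_of_continuousOn
    (hw.continuousOn (s := Icc (0 : ℝ) 1 ×ˢ Icc 0 1))
  exact hf.integrableOn_Icc.bdd_mul
    (hw.measurable.comp (hk.1.measurable.prodMk measurable_const)).aestronglyMeasurable
    (ae_of_all _ fun y => hM (k y, k z) ⟨hk.2 y, hk.2 z⟩)

theorem stmt6_general
    (μ : Measure ℝ) [IsProbabilityMeasure μ]
    (z : ℝ)
    (w f : ℝ → ℝ → ℝ)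
    (hw : ContDiff ℝ 1 fun p : ℝ × ℝ => w p.1 p.2)
    (hf : ContDiff ℝ 1 fun p : ℝ × ℝ => f p.1 p.2)
    (k : ℝ → ℝ) (hk : k ∈ Kclass)
    (s : ℝ → ℝ)
    (t : ℕ → ℝ) (ht : Tendsto t atTop (nhds 0)) (ht_ne : ∀ n, t n ≠ 0)
    (st : ℕ → ℝ → ℝ)
    (hst_mem : ∀ n, st n ∈ Kclass)
    (hst_pert : ∀ n, (fun y => k y + t n * st n y) ∈ Kclass)
    (hst_tendsto : TendstoUniformly st s atTop) :
    Tendsto (fun n =>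
        (phiOp μ z w f (fun y => k y + t n * st n y) - phiOp μ z w f k) / t n)
      atTop
      (nhds (∫ y in Icc 0 z,
        (s y * pd1 w (k y) (k z) + s z * pd2 w (k y) (k z)) * f y z ∂μ)) := by
  obtain ⟨L, hL⟩ := hw.contDiffOn.exists_lipschitzOnWith one_ne_zero
    ((convex_Icc 0 1).prod (convex_Icc 0 1)) (isCompact_Icc.prod isCompact_Icc)
  have hfz : ContinuousOn (fun y => f y z) (Icc 0 z) :=
    (hf.continuous.comp (continuous_id.prodMk continuous_const)).continuousOn
  have hΦ : ∀ k' ∈ Kclass, IntegrableOn (fun y => w (k' y) (k' z) * f y z) (Icc 0 z) μ :=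
    fun _ hk' => integrableOn_phiOp_integrand hw.continuous hfz hk'
  have hquot : ∀ n, (phiOp μ z w f (fun y => k y + t n * st n y) - phiOp μ z w f k) / t n =
      ∫ y in Icc 0 z, (w (k y + t n * st n y) (k z + t n * st n z) - w (k y) (k z)) / t n
        * f y z ∂μ := by
    intro n
    rw [phiOp, phiOp, ← integral_sub (hΦ _ (hst_pert n)) (hΦ k hk), ← integral_div]
    simp only [sub_mul, div_mul_eq_mul_div]
  simp_rw [hquot]
  refine tendsto_integral_of_dominated_convergence (fun y => L * ‖f y z‖)
    (fun n => ?_) (hfz.integrableOn_Icc.norm.const_mul L) (fun n => ae_of_all _ fun y => ?_)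
    (ae_of_all _ fun y => (tendsto_slope_uncurry (hw.differentiable one_ne_zero _) ht
      (.of_forall ht_ne) (hst_tendsto.tendsto_at y) (hst_tendsto.tendsto_at z)).mul_const _)
  · refine (((hΦ _ (hst_pert n)).sub (hΦ k hk)).div_const (t n)).aestronglyMeasurable.congr
      (ae_of_all _ fun y => ?_)
    simp only [Pi.sub_apply, sub_mul, div_mul_eq_mul_div]
  · rw [norm_mul, norm_div, Real.norm_eq_abs, Real.norm_eq_abs (t n)]
    gcongr
    exact div_le_of_le_mul₀ (abs_nonneg _) L.coe_nonneg
      (abs_sub_le_of_lipschitzOnWith hL hk (hst_mem n) (hst_pert n) y z)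

theorem stmt6
    (μ : Measure ℝ) [IsProbabilityMeasure μ]
    (z : ℝ) (hz : 0 < z)
    (w f : ℝ → ℝ → ℝ)
    (hw : ContDiff ℝ 1 fun p : ℝ × ℝ => w p.1 p.2)
    (hf : ContDiff ℝ 1 fun p : ℝ × ℝ => f p.1 p.2)
    (hw_nonneg : ∀ u v, 0 ≤ w u v)
    (hw_anti : ∀ v, Antitone fun u => w u v)
    (hf_nonneg : ∀ y t, 0 ≤ f y t)
    (hf_anti : ∀ t, Antitone fun y => f y t)
    (k : ℝ → ℝ) (hk : k ∈ Kclass)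
    (s : ℝ → ℝ) (hs : s ∈ Kclass) (hs_cont : Continuous s)
    (t : ℕ → ℝ) (ht : Tendsto t atTop (nhds 0)) (ht_ne : ∀ n, t n ≠ 0)
    (st : ℕ → ℝ → ℝ)
    (hst_mem : ∀ n, st n ∈ Kclass)
    (hst_pert : ∀ n, (fun y => k y + t n * st n y) ∈ Kclass)
    (hst_tendsto : TendstoUniformly st s atTop) :
    Tendsto (fun n =>
        (phiOp μ z w f (fun y => k y + t n * st n y) - phiOp μ z w f k) / t n)
      atTop
      (nhds (∫ y in Icc 0 z,
        (s y * pd1 w (k y) (k z) + s z * pd2 w (k y) (k z)) * f y z ∂μ)) :=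
  stmt6_general μ z w f hw hf k hk s t ht ht_ne st hst_mem hst_pert hst_tendsto
end
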